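/- arXiv:2401.15403 — 2 statements merged into one kernel-verified Lean document; each statement's English description precedes it below -/
import Mathlib

section
/- If F is a graph on f vertices that is (s, k)-biseparable, then for any positive integer r, the Cartesian power H = F^{□r} is (r·f^{r-1}·s, k^r)-biseparable. -/
/-!
Delete from `F^□r` every edge whose moving coordinate runs along an edge of `E₁`: what remains is
exactly `(F \ E₁)^□r`. Summing the colours of the coordinates (mod 2) colours it properly, and
each of its components lies in a product of components of `F \ E₁`, so has at most `k^r`
vertices. A deleted edge is determined by its direction (`r` choices), its edge of `E₁`
(at most `s`) and its remaining `r - 1` coordinates (`f^(r-1)` choices).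
-/

/-- The `r`-fold Cartesian power of a graph `G`. -/
def cartPow {V : Type*} (G : SimpleGraph V) (r : ℕ) : SimpleGraph (Fin r → V) where
  Adj x y := ∃ i, G.Adj (x i) (y i) ∧ ∀ j, j ≠ i → x j = y j
  symm := by
    constructor
    rintro x y ⟨i, hadj, hrest⟩
    exact ⟨i, hadj.symm, fun j hj => (hrest j hj).symm⟩
  loopless := by
    constructor
    rintro x ⟨i, hadj, -⟩
    exact hadj.ne rfl

/-- A graph `H` is `(s,k)`-biseparable if one can delete a set `E₁` of at most `s`
edges so that `H \ E₁` is bipartite and every connected component of `H \ E₁`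
has at most `k` vertices. -/
def Biseparable {V : Type*} (H : SimpleGraph V) (s k : ℕ) : Prop :=
  ∃ E1 ⊆ H.edgeSet, E1.ncard ≤ s ∧ (H.deleteEdges E1).Colorable 2 ∧
    ∀ v : V, ((H.deleteEdges E1).connectedComponentMk v).supp.ncard ≤ k

open SimpleGraph

section

variable {V : Type*} {r : ℕ}

theorem cartPow_mono {G H : SimpleGraph V} (h : G ≤ H) : cartPow G r ≤ cartPow H r :=
  fun _ _ ⟨i, hadj, hrest⟩ => ⟨i, h hadj, hrest⟩

theorem SimpleGraph.Reachable.apply_of_cartPow {G : SimpleGraph V} {x y : Fin r → V}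
    (h : (cartPow G r).Reachable x y) (i : Fin r) : G.Reachable (x i) (y i) := by
  obtain ⟨w⟩ := h
  induction w with
  | nil => rfl
  | cons hadj _ ih =>
    obtain ⟨j, hadj, hrest⟩ := hadj
    obtain rfl | hij := eq_or_ne i j
    · exact hadj.reachable.trans ih
    · exact hrest i hij ▸ ih

theorem supp_connectedComponentMk_cartPow_subset_pi (G : SimpleGraph V) (x : Fin r → V) :
    ((cartPow G r).connectedComponentMk x).supp ⊆
      Set.univ.pi fun i => (G.connectedComponentMk (x i)).supp := by
  intro y hy i _
  rw [ConnectedComponent.mem_supp_iff, ConnectedComponent.eq] at hy ⊢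
  exact hy.apply_of_cartPow i

theorem ncard_supp_connectedComponentMk_cartPow_le [Finite V] {G : SimpleGraph V} {k : ℕ}
    (hk : ∀ v, (G.connectedComponentMk v).supp.ncard ≤ k) (x : Fin r → V) :
    ((cartPow G r).connectedComponentMk x).supp.ncard ≤ k ^ r :=
  calc ((cartPow G r).connectedComponentMk x).supp.ncard
      ≤ (Set.univ.pi fun i => (G.connectedComponentMk (x i)).supp).ncard :=
        Set.ncard_le_ncard (supp_connectedComponentMk_cartPow_subset_pi G x)
    _ = ∏ i, (G.connectedComponentMk (x i)).supp.ncard := by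
        rw [← Nat.card_coe_set_eq, Nat.card_congr (Equiv.Set.univPi _), Nat.card_pi]
        simp only [Nat.card_coe_set_eq]
    _ ≤ ∏ _i : Fin r, k := Finset.prod_le_prod' fun i _ => hk (x i)
    _ = k ^ r := by simp

def SimpleGraph.Coloring.cartPow {α : Type*} [AddCancelCommMonoid α] {G : SimpleGraph V}
    (C : G.Coloring α) (r : ℕ) : (cartPow G r).Coloring α :=
  Coloring.mk (fun x => ∑ i, C (x i)) fun {x y} ⟨i, hadj, hrest⟩ hsum => by
    classical
    rw [← Finset.add_sum_erase _ _ (Finset.mem_univ i),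
      ← Finset.add_sum_erase _ _ (Finset.mem_univ i),
      Finset.sum_congr rfl fun j hj => by rw [hrest j (Finset.ne_of_mem_erase hj)]] at hsum
    exact C.valid hadj (add_right_cancel hsum)

theorem SimpleGraph.Colorable.cartPow {n : ℕ} [NeZero n] {G : SimpleGraph V}
    (h : G.Colorable n) (r : ℕ) : (cartPow G r).Colorable n :=
  let ⟨C⟩ := h; ⟨C.cartPow r⟩

/-- An edge of `cartPow F r` moves a single coordinate `i`, so it is determined by `i`, its image
in `F` and its other coordinates. -/
theorem cartPow_edgeSet_diff_subset_range (F : SimpleGraph V) (E : Set (Sym2 V)) :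
    (cartPow F r).edgeSet \ (cartPow (F.deleteEdges E) r).edgeSet ⊆
      Set.range fun p : Σ i : Fin r, E × ({j // j ≠ i} → V) =>
        p.2.1.1.map fun a => (Equiv.funSplitAt p.1 V).symm (a, p.2.2) := by
  rintro e ⟨he, hne⟩
  induction e using Sym2.ind with | h x y => ?_
  obtain ⟨i, hadj, hrest⟩ := he
  have hE : s(x i, y i) ∈ E := by
    by_contra h
    exact hne ⟨i, (deleteEdges_adj ..).2 ⟨hadj, h⟩, hrest⟩
  have hy : (Equiv.funSplitAt i V).symm (y i, fun j => x j) = y := by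
    rw [Equiv.symm_apply_eq]
    ext j
    exacts [rfl, hrest j j.2]
  refine ⟨⟨i, ⟨_, hE⟩, fun j => x j⟩, ?_⟩
  simp only [Sym2.map_mk, hy]
  rw [← Equiv.funSplitAt_apply, Equiv.symm_apply_apply]

theorem ncard_cartPow_edgeSet_diff_le [Fintype V] (F : SimpleGraph V) (E : Set (Sym2 V)) :
    ((cartPow F r).edgeSet \ (cartPow (F.deleteEdges E) r).edgeSet).ncard ≤
      r * Fintype.card V ^ (r - 1) * E.ncard :=
  calc _ ≤ (Set.range _).ncard :=
        Set.ncard_le_ncard (cartPow_edgeSet_diff_subset_range F E) (Set.toFinite _)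
    _ ≤ Nat.card (Σ i : Fin r, E × ({j // j ≠ i} → V)) := Finite.card_range_le _
    _ = r * Fintype.card V ^ (r - 1) * E.ncard := by
        simp only [ne_eq, Nat.card_sigma, Nat.card_prod, Nat.card_coe_set_eq,
          Nat.card_eq_fintype_card, Fintype.card_pi, Finset.prod_const, Finset.card_univ,
          Fintype.card_subtype_compl, Fintype.card_fin, Fintype.card_unique, Finset.sum_const,
          smul_eq_mul]
        ring

end

theorem stmt_4_general {V : Type*} [Fintype V] (F : SimpleGraph V) (s k r : ℕ)
    (hF : Biseparable F s k) :
    Biseparable (cartPow F r) (r * Fintype.card V ^ (r - 1) * s) (k ^ r) := by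
  obtain ⟨E, -, hEcard, hcol, hcomp⟩ := hF
  have hdel : (cartPow F r).deleteEdges
      ((cartPow F r).edgeSet \ (cartPow (F.deleteEdges E) r).edgeSet) =
        cartPow (F.deleteEdges E) r :=
    deleteEdges_sdiff_eq_of_le (cartPow_mono (deleteEdges_le E))
  refine ⟨(cartPow F r).edgeSet \ (cartPow (F.deleteEdges E) r).edgeSet, Set.sdiff_subset,
    (ncard_cartPow_edgeSet_diff_le F E).trans (Nat.mul_le_mul_left _ hEcard), ?_, ?_⟩ <;>
    rw [hdel]
  · exact hcol.cartPow r
  · exact ncard_supp_connectedComponentMk_cartPow_le hcomp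

/-- If `F` is a graph on `f` vertices that is `(s,k)`-biseparable, then for any positive
integer `r`, the Cartesian power `H = F^{□r}` is `(r·f^{r-1}·s, k^r)`-biseparable. -/
theorem stmt_4 {V : Type*} [Fintype V] (F : SimpleGraph V) (s k r : ℕ) (hr : 0 < r)
    (hF : Biseparable F s k) :
    Biseparable (cartPow F r) (r * Fintype.card V ^ (r - 1) * s) (k ^ r) :=
  stmt_4_general F s k r hF
end

section
/- Let G be a graph with n = |V(G)| in which every subset X of vertices with k/2 ≤ |X| ≤ n/2 satisfies |N(X)| ≥ ρ(|X|)·|X|, where ρ(x) = ε₁/log²(15x/k) for x ≥ k/5 (and ρ(x)=0 for x < k/5), with 0 < ε₁ < 1. If v is a vertex with deg(v) ≥ k and m is an integer with m > log(n/k)/log(1+ρ(n)/2) + 1, then the ball B^m_G(v) of radius m around v has size at least n/2. -/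
/-- In a sublinear expander with rate `ρ(x) = ε₁/log²(15x/k)` (for `x ≥ k/5`, and `0`
below), any vertex `v` of degree at least `k` has a ball of radius
`m > log(n/k)/log(1+ρ(n)/2) + 1` around it of size at least `n/2`. -/
theorem stmt_10 {V : Type*} [Fintype V] [DecidableEq V] (G : SimpleGraph V)
    [DecidableRel G.Adj] (ε₁ k : ℝ) (hε₁ : 0 < ε₁) (hε₁' : ε₁ < 1) (hk : 0 < k)
    (ρ : ℝ → ℝ)
    (hρ : ∀ x : ℝ, ρ x = if x < k / 5 then 0 else ε₁ / (Real.log (15 * x / k)) ^ 2)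
    (hexp : ∀ X : Set V, k / 2 ≤ X.ncard → (X.ncard : ℝ) ≤ (Fintype.card V : ℝ) / 2 →
      ρ X.ncard * X.ncard ≤ (((⋃ u ∈ X, G.neighborSet u) \ X).ncard : ℝ))
    (v : V) (hv : k ≤ (G.degree v : ℝ)) (m : ℕ)
    (hm : Real.log ((Fintype.card V : ℝ) / k) /
        Real.log (1 + ρ (Fintype.card V) / 2) + 1 < m) :
    (Fintype.card V : ℝ) / 2 ≤
      (({u : V | ∃ p : G.Walk v u, p.length ≤ m} : Set V).ncard : ℝ) := by
  classical
  set n : ℕ := Fintype.card V with hn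
  set S : ℕ → Set V := fun i => {u : V | ∃ p : G.Walk v u, p.length ≤ i} with hS
  have hSmono : ∀ i j : ℕ, i ≤ j → S i ⊆ S j := by
    rintro i j hij u ⟨p, hp⟩
    exact ⟨p, hp.trans hij⟩
  have hnbr : ∀ i : ℕ, (⋃ u ∈ S i, G.neighborSet u) ⊆ S (i + 1) := by
    intro i w hw
    simp only [Set.mem_iUnion] at hw
    obtain ⟨u, ⟨p, hp⟩, hadj⟩ := hw
    exact ⟨p.concat ((G.mem_neighborSet u w).mp hadj), by rw [SimpleGraph.Walk.length_concat]; omega⟩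
  -- key counting step
  have hstep : ∀ i : ℕ,
      (S i).ncard + ((⋃ u ∈ S i, G.neighborSet u) \ (S i)).ncard ≤ (S (i + 1)).ncard := by
    intro i
    rw [← Set.ncard_union_eq Set.disjoint_sdiff_right (Set.toFinite _) (Set.toFinite _)]
    exact Set.ncard_le_ncard
      (Set.union_subset (hSmono i (i + 1) (Nat.le_succ i))
        (Set.diff_subset.trans (hnbr i))) (Set.toFinite _)
  -- basic numeric facts
  have hkn : k < (n : ℝ) := lt_of_le_of_lt hv (by exact_mod_cast G.degree_lt_card_verts v)
  have hn0 : (0 : ℝ) < n := hk.trans hkn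
  have hnk1 : (1 : ℝ) < (n : ℝ) / k := (one_lt_div hk).mpr hkn
  have hlognk : 0 < Real.log ((n : ℝ) / k) := Real.log_pos hnk1
  set r : ℝ := ρ n with hr
  have hlog15n : 0 < Real.log (15 * (n : ℝ) / k) := by
    apply Real.log_pos
    rw [lt_div_iff₀ hk]
    nlinarith
  have hrval : r = ε₁ / (Real.log (15 * (n : ℝ) / k)) ^ 2 := by
    rw [hr, hρ, if_neg]
    push_neg
    nlinarith
  have hr0 : 0 < r := by rw [hrval]; positivity
  have hlog1r : 0 < Real.log (1 + r) := Real.log_pos (by linarith)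
  have hlog1r2 : 0 < Real.log (1 + r / 2) := Real.log_pos (by linarith)
  -- m ≥ 1
  have hm1 : 1 ≤ m := by
    have h : (1 : ℝ) < (m : ℝ) := by
      have : 0 < Real.log ((n : ℝ) / k) / Real.log (1 + r / 2) := by positivity
      linarith
    exact_mod_cast h.le
  -- from hm: log(n/k) < (m-1) * log(1+r)
  have hmkey : Real.log ((n : ℝ) / k) < ((m : ℝ) - 1) * Real.log (1 + r) := by
    have h1 : Real.log ((n : ℝ) / k) / Real.log (1 + r)
        ≤ Real.log ((n : ℝ) / k) / Real.log (1 + r / 2) :=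
      div_le_div_of_nonneg_left hlognk.le hlog1r2
        (Real.log_le_log (by linarith) (by linarith))
    have h2 : Real.log ((n : ℝ) / k) / Real.log (1 + r) < (m : ℝ) - 1 := by linarith
    rw [div_lt_iff₀ hlog1r] at h2
    linarith
  -- base: k ≤ |S 1|
  have hbase : k ≤ ((S 1).ncard : ℝ) := by
    have hsub : G.neighborSet v ⊆ S 1 := by
      intro w hw
      exact ⟨SimpleGraph.Walk.cons ((G.mem_neighborSet v w).mp hw) SimpleGraph.Walk.nil, by simp⟩
    have hcard : G.degree v ≤ (S 1).ncard := by
      have h := Set.ncard_le_ncard hsub (Set.toFinite _)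
      have hdeg : (G.neighborSet v).ncard = G.degree v := by
        rw [← Nat.card_coe_set_eq, Nat.card_eq_fintype_card,
          SimpleGraph.card_neighborSet_eq_degree]
      rwa [hdeg] at h
    exact hv.trans (by exact_mod_cast hcard)
  by_contra hcon
  push_neg at hcon
  have hsmall : ∀ i, i ≤ m → ((S i).ncard : ℝ) ≤ (n : ℝ) / 2 := by
    intro i hi
    have h : (S i).ncard ≤ (S m).ncard := Set.ncard_le_ncard (hSmono i m hi) (Set.toFinite _)
    have h2 : ((S i).ncard : ℝ) ≤ ((S m).ncard : ℝ) := by exact_mod_cast h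
    have h3 : ((S m).ncard : ℝ) < (n : ℝ) / 2 := hcon
    linarith
  -- growth induction
  have hgrow : ∀ j : ℕ, j + 1 ≤ m → k * (1 + r) ^ j ≤ ((S (j + 1)).ncard : ℝ) := by
    intro j
    induction j with
    | zero => intro _; simpa using hbase
    | succ j ih =>
      intro hjm
      have ihv := ih (by omega)
      set s : ℝ := ((S (j + 1)).ncard : ℝ) with hs
      have hpow1 : (1 : ℝ) ≤ (1 + r) ^ j := one_le_pow₀ (by linarith)
      have hks : k ≤ s := le_trans (le_mul_of_one_le_right hk.le hpow1) ihv
      have hshalf : s ≤ (n : ℝ) / 2 := hsmall (j + 1) (by omega)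
      -- monotonicity of ρ : r ≤ ρ s
      have hsn : s ≤ (n : ℝ) := by linarith
      have h15s : (0 : ℝ) < 15 * s / k := div_pos (by linarith) hk
      have hlog15s : 0 < Real.log (15 * s / k) := by
        apply Real.log_pos
        rw [lt_div_iff₀ hk]
        linarith
      have hρs : r ≤ ρ s := by
        rw [hρ s, if_neg (by push_neg; linarith), hrval]
        have hle : Real.log (15 * s / k) ≤ Real.log (15 * (n : ℝ) / k) :=
          Real.log_le_log h15s (div_le_div_of_nonneg_right (by linarith) hk.le)
        exact div_le_div_of_nonneg_left hε₁.le (pow_pos hlog15s 2)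
          (by nlinarith [hle, hlog15s])
      have hex := hexp (S (j + 1)) (by rw [← hs]; linarith) (by rw [← hs]; exact hshalf)
      rw [← hs] at hex
      have hst : ((S (j + 1)).ncard : ℝ) + (((⋃ u ∈ S (j + 1), G.neighborSet u) \ S (j + 1)).ncard : ℝ)
          ≤ ((S (j + 1 + 1)).ncard : ℝ) := by exact_mod_cast hstep (j + 1)
      rw [← hs] at hst
      have hs0 : 0 ≤ s := le_trans hk.le hks
      calc k * (1 + r) ^ (j + 1) = (k * (1 + r) ^ j) * (1 + r) := by ring
        _ ≤ s * (1 + r) := mul_le_mul_of_nonneg_right ihv (by linarith)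
        _ = s + r * s := by ring
        _ ≤ s + ρ s * s := by linarith [mul_le_mul_of_nonneg_right hρs hs0]
        _ ≤ s + (((⋃ u ∈ S (j + 1), G.neighborSet u) \ S (j + 1)).ncard : ℝ) := by linarith
        _ ≤ ((S (j + 1 + 1)).ncard : ℝ) := hst
  -- conclude
  have hmm : m - 1 + 1 = m := by omega
  have hmain := hgrow (m - 1) (by omega)
  rw [hmm] at hmain
  have hcast : ((m - 1 : ℕ) : ℝ) = (m : ℝ) - 1 := by
    have := Nat.cast_sub (R := ℝ) hm1
    simpa using this
  have hpowgt : ((n : ℝ) / k) < (1 + r) ^ (m - 1) := by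
    rw [← Real.log_lt_log_iff (by positivity) (by positivity), Real.log_pow, hcast]
    exact hmkey
  have hlt : (n : ℝ) < k * (1 + r) ^ (m - 1) := by
    rw [div_lt_iff₀ hk] at hpowgt
    linarith
  have hub : ((S m).ncard : ℝ) ≤ (n : ℝ) := by
    have h := Set.ncard_le_ncard (Set.subset_univ (S m)) Set.finite_univ
    rw [Set.ncard_univ, Nat.card_eq_fintype_card] at h
    exact_mod_cast h
  have hconS : ((S m).ncard : ℝ) < (n : ℝ) / 2 := hcon
  linarith
end
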